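/- arXiv:2104.05972 — 6 statements merged into one kernel-verified Lean document; each statement's English description precedes it below -/
import Mathlib

section
/- Let r > 0 and let x = r·e^{iu}, y = r·e^{iv} with 0 < u ≤ v < π. Then |x - ȳ| - |x - y| = (1/r)·|x - r|·|y + r|, where ȳ denotes the complex conjugate of y. -/
/-!
All four distances are chords of the circle of radius `r`:
`‖r e^{ia} - r e^{ib}‖ = 2r sin((a-b)/2)` for `0 ≤ a - b ≤ 2π`, with `ȳ = r e^{-iv}` and
`-r = r e^{iπ}`. This gives `2r sin((u+v)/2)`, `2r sin((v-u)/2)`, `2r sin(u/2)` and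
`2r sin((π-v)/2) = 2r cos(v/2)`, and the claim becomes the sum-to-product formula
`sin((u+v)/2) - sin((v-u)/2) = 2 sin(u/2) cos(v/2)`.
-/

open Complex Real

namespace Complex

theorem norm_exp_mul_I_sub_exp_mul_I (a b : ℝ) :
    ‖exp (a * I) - exp (b * I)‖ = 2 * |Real.sin ((a - b) / 2)| := by
  have hfactor : exp (a * I) - exp (b * I) = exp (b * I) * (exp (I * ↑(a - b)) - 1) := by
    rw [mul_sub, ← exp_add]
    push_cast
    ring_nf
  rw [hfactor, norm_mul, norm_exp_ofReal_mul_I, norm_exp_I_mul_ofReal_sub_one, norm_mul,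
    Real.norm_eq_abs, Real.norm_eq_abs, abs_two, one_mul]

theorem norm_chord {r a b : ℝ} (hr : 0 ≤ r) (hba : b ≤ a) (hab : a ≤ b + 2 * π) :
    ‖(r : ℂ) * exp (a * I) - r * exp (b * I)‖ = 2 * r * Real.sin ((a - b) / 2) := by
  have hsin : 0 ≤ Real.sin ((a - b) / 2) :=
    sin_nonneg_of_nonneg_of_le_pi (by linarith) (by linarith)
  rw [← mul_sub, norm_mul, norm_exp_mul_I_sub_exp_mul_I, norm_real, Real.norm_of_nonneg hr,
    abs_of_nonneg hsin]
  ring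

end Complex

theorem stmt1 (r u v : ℝ) (hr : 0 < r) (hu : 0 < u) (huv : u ≤ v) (hv : v < Real.pi)
    (x y : ℂ) (hx : x = r * Complex.exp (u * Complex.I))
    (hy : y = r * Complex.exp (v * Complex.I)) :
    ‖x - (starRingEnd ℂ) y‖ - ‖x - y‖ =
      (1 / r) * ‖x - r‖ * ‖y + r‖ := by
  have hconj : (starRingEnd ℂ) y = r * exp (↑(-v) * I) := by
    rw [hy, map_mul, conj_ofReal, ← exp_conj, map_mul, conj_ofReal, conj_I]
    push_cast
    ring_nf
  have hx_conj_y : ‖x - (starRingEnd ℂ) y‖ = 2 * r * Real.sin ((u + v) / 2) := by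
    rw [hx, hconj, norm_chord hr.le (by linarith) (by linarith), sub_neg_eq_add]
  have hx_y : ‖x - y‖ = 2 * r * Real.sin ((v - u) / 2) := by
    rw [norm_sub_rev, hx, hy, norm_chord hr.le huv (by linarith)]
  have hx_r : ‖x - r‖ = 2 * r * Real.sin (u / 2) := by
    rw [show x - r = r * exp (u * I) - r * exp (↑(0 : ℝ) * I) by simp [hx],
      norm_chord hr.le hu.le (by linarith), sub_zero]
  have hy_r : ‖y + r‖ = 2 * r * Real.cos (v / 2) := by
    rw [← norm_neg, show -(y + r) = r * exp (↑π * I) - r * exp (v * I) by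
        rw [hy, exp_pi_mul_I]; ring,
      norm_chord hr.le hv.le (by linarith), ← Real.sin_pi_div_two_sub]
    ring_nf
  have hsin_sub : Real.sin ((u + v) / 2) - Real.sin ((v - u) / 2) =
      2 * Real.sin (u / 2) * Real.cos (v / 2) := by
    rw [Real.sin_sub_sin]
    ring_nf
  rw [hx_conj_y, hx_y, hx_r, hy_r, ← mul_sub, hsin_sub]
  field_simp
end

section
/- Fix θ with π < θ < 2π and r = 1. For x = e^{i(1-k)θ/2} and y = e^{i(1+k)θ/2} with 0 < k < 1, the cross-ratios satisfy |1, x, e^{iθ}, y| = sin(θ/2)·sin(kθ/2)/sin²((1-k)θ/4) and |0, x, ∞, y| = 2·sin(kθ/2), and the limit as k → 0⁺ of their quotient |1,x,e^{iθ},y|/|0,x,∞,y| equals cos(θ/4)/sin(θ/4), which is strictly less than 1. -/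
open Complex Real Filter Topology

/-- The (absolute) cross-ratio `|a,b,c,d|` of four finite points. -/
noncomputable def crossRatio (a b c d : ℂ) : ℝ :=
  (‖a - c‖ * ‖b - d‖) /
    (‖a - b‖ * ‖c - d‖)

/-!
All five points lie on the unit circle, where the chord between `e^{ia}` and `e^{ib}` has length
`2 |sin ((a - b) / 2)|`, so both cross-ratios are explicit products of sines. Their quotient is
`sin (θ/2) / (2 sin² ((1 - k) θ / 4))`, continuous in `k`, and at `k = 0` the double-angle formula
turns it into `cot (θ/4)`, which is `< 1` because `π/4 < θ/4 < π/2`.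
-/

theorem Complex.norm_exp_ofReal_mul_I_sub_exp_ofReal_mul_I (a b : ℝ) :
    ‖exp (a * I) - exp (b * I)‖ = 2 * |Real.sin ((a - b) / 2)| := by
  have h : exp (a * I) - exp (b * I) = exp (b * I) * (exp (I * ↑(a - b)) - 1) := by
    rw [mul_sub, ← exp_add, mul_one]
    congr 2
    push_cast
    ring
  rw [h, norm_mul, norm_exp_ofReal_mul_I, one_mul, norm_exp_I_mul_ofReal_sub_one,
    Real.norm_eq_abs, abs_mul, abs_two]

theorem crossRatio_exp_ofReal_mul_I (a b c d : ℝ) :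
    crossRatio (exp (a * I)) (exp (b * I)) (exp (c * I)) (exp (d * I)) =
      |Real.sin ((a - c) / 2)| * |Real.sin ((b - d) / 2)| /
        (|Real.sin ((a - b) / 2)| * |Real.sin ((c - d) / 2)|) := by
  simp only [crossRatio, norm_exp_ofReal_mul_I_sub_exp_ofReal_mul_I]
  ring

theorem Real.sin_two_mul_div_two_mul_sin_sq {t : ℝ} (ht : Real.sin t ≠ 0) :
    Real.sin (2 * t) / (2 * Real.sin t ^ 2) = Real.cos t / Real.sin t := by
  rw [Real.sin_two_mul]
  field_simp

theorem Real.cos_div_sin_lt_one {t : ℝ} (ht₁ : π / 4 < t) (ht₂ : t < π) :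
    Real.cos t / Real.sin t < 1 := by
  have hsin : 0 < Real.sin t := Real.sin_pos_of_pos_of_lt_pi (by linarith [pi_pos]) ht₂
  have hshift : 0 < Real.sin (t - π / 4) := Real.sin_pos_of_pos_of_lt_pi (by linarith) (by linarith)
  rw [Real.sin_sub, Real.cos_pi_div_four, Real.sin_pi_div_four] at hshift
  rw [div_lt_one hsin]
  nlinarith [Real.sqrt_nonneg 2, Real.sq_sqrt (show (0 : ℝ) ≤ 2 by norm_num)]

section Configuration

variable (θ k : ℝ)

theorem norm_exp_sub_exp_symmetric :
    ‖exp (↑((1 - k) * θ / 2) * I) - exp (↑((1 + k) * θ / 2) * I)‖ = 2 * |Real.sin (k * θ / 2)| := by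
  rw [norm_exp_ofReal_mul_I_sub_exp_ofReal_mul_I,
    show ((1 - k) * θ / 2 - (1 + k) * θ / 2) / 2 = -(k * θ / 2) by ring, Real.sin_neg, abs_neg]

theorem crossRatio_one_exp_symmetric :
    crossRatio 1 (exp (↑((1 - k) * θ / 2) * I)) (exp (θ * I)) (exp (↑((1 + k) * θ / 2) * I)) =
      |Real.sin (θ / 2)| * |Real.sin (k * θ / 2)| / Real.sin ((1 - k) * θ / 4) ^ 2 := by
  rw [show (1 : ℂ) = exp (↑(0 : ℝ) * I) by simp, crossRatio_exp_ofReal_mul_I,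
    show (0 - θ) / 2 = -(θ / 2) by ring,
    show ((1 - k) * θ / 2 - (1 + k) * θ / 2) / 2 = -(k * θ / 2) by ring,
    show (0 - (1 - k) * θ / 2) / 2 = -((1 - k) * θ / 4) by ring,
    show (θ - (1 + k) * θ / 2) / 2 = (1 - k) * θ / 4 by ring]
  simp only [Real.sin_neg, abs_neg, abs_mul_abs_self, sq]

end Configuration

theorem tendsto_sin_half_div_two_mul_sin_sq {θ : ℝ} (hθ : Real.sin (θ / 4) ≠ 0) :
    Tendsto (fun k => Real.sin (θ / 2) / (2 * Real.sin ((1 - k) * θ / 4) ^ 2)) (𝓝 0)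
      (𝓝 (Real.cos (θ / 4) / Real.sin (θ / 4))) := by
  have hcont : ContinuousAt (fun k => Real.sin (θ / 2) / (2 * Real.sin ((1 - k) * θ / 4) ^ 2)) 0 :=
    continuousAt_const.div (by fun_prop) (by simpa using hθ)
  convert hcont.tendsto using 2
  rw [sub_zero, one_mul, show θ / 2 = 2 * (θ / 4) by ring,
    Real.sin_two_mul_div_two_mul_sin_sq hθ]

theorem stmt6 (θ : ℝ) (hθ1 : Real.pi < θ) (hθ2 : θ < 2 * Real.pi)
    (x y : ℝ → ℂ)
    (hx : ∀ k, x k = Complex.exp (((1 - k) * θ / 2) * Complex.I))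
    (hy : ∀ k, y k = Complex.exp (((1 + k) * θ / 2) * Complex.I)) :
    (∀ k : ℝ, 0 < k → k < 1 →
        crossRatio 1 (x k) (Complex.exp (θ * Complex.I)) (y k) =
          Real.sin (θ / 2) * Real.sin (k * θ / 2) / (Real.sin ((1 - k) * θ / 4))^2) ∧
    (∀ k : ℝ, 0 < k → k < 1 →
        ‖x k - y k‖ / ‖x k‖ = 2 * Real.sin (k * θ / 2)) ∧
    Filter.Tendsto
      (fun k : ℝ => crossRatio 1 (x k) (Complex.exp (θ * Complex.I)) (y k) /
        (‖x k - y k‖ / ‖x k‖))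
      (nhdsWithin 0 (Set.Ioi 0)) (nhds (Real.cos (θ / 4) / Real.sin (θ / 4))) ∧
    Real.cos (θ / 4) / Real.sin (θ / 4) < 1 := by
  have hx' (k : ℝ) : x k = exp (↑((1 - k) * θ / 2) * I) := by rw [hx]; push_cast; rfl
  have hy' (k : ℝ) : y k = exp (↑((1 + k) * θ / 2) * I) := by rw [hy]; push_cast; rfl
  have hsin_half : 0 < Real.sin (θ / 2) :=
    Real.sin_pos_of_pos_of_lt_pi (by linarith [pi_pos]) (by linarith)
  have hsin_quarter : 0 < Real.sin (θ / 4) :=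
    Real.sin_pos_of_pos_of_lt_pi (by linarith [pi_pos]) (by linarith)
  have hsin_gap {k : ℝ} (hk₀ : 0 < k) (hk₁ : k < 1) : 0 < Real.sin (k * θ / 2) :=
    Real.sin_pos_of_pos_of_lt_pi (by nlinarith [pi_pos]) (by nlinarith)
  have hcross {k : ℝ} (hk₀ : 0 < k) (hk₁ : k < 1) :
      crossRatio 1 (x k) (exp (θ * I)) (y k) =
        Real.sin (θ / 2) * Real.sin (k * θ / 2) / Real.sin ((1 - k) * θ / 4) ^ 2 := by
    rw [hx', hy', crossRatio_one_exp_symmetric, abs_of_pos hsin_half,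
      abs_of_pos (hsin_gap hk₀ hk₁)]
  have hdist {k : ℝ} (hk₀ : 0 < k) (hk₁ : k < 1) :
      ‖x k - y k‖ / ‖x k‖ = 2 * Real.sin (k * θ / 2) := by
    rw [hx', hy', norm_exp_sub_exp_symmetric, norm_exp_ofReal_mul_I, div_one,
      abs_of_pos (hsin_gap hk₀ hk₁)]
  refine ⟨fun k => hcross, fun k => hdist, ?_, Real.cos_div_sin_lt_one (by linarith) (by linarith)⟩
  refine ((tendsto_sin_half_div_two_mul_sin_sq hsin_quarter.ne').mono_left
    nhdsWithin_le_nhds).congr' ?_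
  filter_upwards [Ioo_mem_nhdsGT (zero_lt_one' ℝ)] with k ⟨hk₀, hk₁⟩
  rw [hcross hk₀ hk₁, hdist hk₀ hk₁]
  have hg := (hsin_gap hk₀ hk₁).ne'
  generalize Real.sin (k * θ / 2) = g at hg ⊢
  field_simp
end

section
/- For x = r·e^{i(1-k)θ/2} and y = r·e^{i(1+k)θ/2} with r > 0, 0 < k < 1, and 0 < θ < 2π, the hyperbolic distance in the sector S_θ satisfies ρ_{S_θ}(x,y) = log(1 + sin(kπ/2)/sin²((1-k)π/4)). -/
open Complex Real

/-- `artanh t = (1/2) log((1+t)/(1-t))`, the inverse hyperbolic tangent. -/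
noncomputable def artanh (t : ℝ) : ℝ := Real.log ((1 + t) / (1 - t)) / 2

/-- The hyperbolic distance in the upper half-plane, characterized by
`th(ρ/2) = |a - b| / |a - conj b|`. -/
noncomputable def rhoH (a b : ℂ) : ℝ :=
  2 * _root_.artanh (‖a - b‖ / ‖a - (starRingEnd ℂ) b‖)

/- The sector map sends `x` and `y` to `R e^{iα}` and `R e^{i(π-α)}` with `α = (1-k)π/2`, two points
symmetric under `z ↦ -z̄`. Then `X - Y = 2R cos α` and `X - Ȳ = 2R e^{iα}`, so `th(ρ/2) = cos α`,
and `ρ = log((1 + cos α)/(1 - cos α))`; finally `1 - cos α = 2 sin²(α/2)` and `cos α = sin(kπ/2)`. -/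

theorem two_mul_artanh (t : ℝ) : 2 * _root_.artanh t = Real.log ((1 + t) / (1 - t)) := by
  rw [_root_.artanh]
  ring

theorem one_add_cos_div_one_sub_cos {α : ℝ} (hα : Real.cos α ≠ 1) :
    (1 + Real.cos α) / (1 - Real.cos α) = 1 + Real.cos α / Real.sin (α / 2) ^ 2 := by
  have hhalf : Real.sin (α / 2) ^ 2 = (1 - Real.cos α) / 2 := by
    rw [Real.sin_sq_eq_half_sub, mul_div_cancel₀ α two_ne_zero]
    ring
  have hne : 1 - Real.cos α ≠ 0 := sub_ne_zero.mpr (Ne.symm hα)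
  rw [hhalf]
  field_simp
  ring

section Reflection

variable {R α : ℝ}

theorem norm_mul_exp_sub_mul_exp_pi_sub :
    ‖(R : ℂ) * exp (α * I) - R * exp ((π - α : ℝ) * I)‖ = 2 * |R| * |Real.cos α| := by
  have h : (R : ℂ) * exp (α * I) - R * exp ((π - α : ℝ) * I) = ((2 * R * Real.cos α : ℝ) : ℂ) := by
    rw [exp_mul_I, exp_mul_I, ← ofReal_cos, ← ofReal_sin, ← ofReal_cos, ← ofReal_sin,
      Real.cos_pi_sub, Real.sin_pi_sub]
    push_cast
    ring
  rw [h, norm_real, Real.norm_eq_abs, abs_mul, abs_mul, abs_two]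

theorem norm_mul_exp_sub_conj_mul_exp_pi_sub :
    ‖(R : ℂ) * exp (α * I) - starRingEnd ℂ ((R : ℂ) * exp ((π - α : ℝ) * I))‖ = 2 * |R| := by
  have h : (R : ℂ) * exp (α * I) - starRingEnd ℂ ((R : ℂ) * exp ((π - α : ℝ) * I))
      = ((2 * R : ℝ) : ℂ) * exp (α * I) := by
    rw [exp_mul_I, exp_mul_I, ← ofReal_cos, ← ofReal_sin, ← ofReal_cos, ← ofReal_sin,
      Real.cos_pi_sub, Real.sin_pi_sub]
    simp only [map_mul, map_add, conj_ofReal, conj_I]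
    push_cast
    ring
  rw [h, norm_mul, norm_real, norm_exp_ofReal_mul_I, mul_one, Real.norm_eq_abs, abs_mul, abs_two]

theorem rhoH_mul_exp_mul_exp_pi_sub (hR : R ≠ 0) :
    rhoH (R * exp (α * I)) (R * exp ((π - α : ℝ) * I)) = 2 * _root_.artanh |Real.cos α| := by
  have h2R : 2 * |R| ≠ 0 := by positivity
  rw [rhoH, norm_mul_exp_sub_mul_exp_pi_sub, norm_mul_exp_sub_conj_mul_exp_pi_sub,
    mul_div_cancel_left₀ _ h2R]

end Reflection

theorem stmt7_general (r k θ : ℝ) (hr : 0 < r) (hk1 : 0 < k) (hk2 : k < 1)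
    (X Y : ℂ)
    -- images of `x = r·e^{i(1-k)θ/2}` and `y = r·e^{i(1+k)θ/2}` under `z ↦ z^{π/θ}`,
    -- the conformal map of the sector `S_θ` onto the upper half-plane:
    (hX : X = (r ^ (Real.pi / θ) : ℝ) * Complex.exp (((1 - k) * Real.pi / 2) * Complex.I))
    (hY : Y = (r ^ (Real.pi / θ) : ℝ) * Complex.exp (((1 + k) * Real.pi / 2) * Complex.I)) :
    rhoH X Y = Real.log (1 + Real.sin (k * Real.pi / 2) / (Real.sin ((1 - k) * Real.pi / 4))^2) := by
  set α := (1 - k) * π / 2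
  have hα_pos : 0 < α := by simp only [α]; nlinarith [Real.pi_pos]
  have hα_lt : α < π / 2 := by simp only [α]; nlinarith [Real.pi_pos]
  have hcos_pos : 0 < Real.cos α := Real.cos_pos_of_mem_Ioo ⟨by linarith, hα_lt⟩
  have hcos_ne_one : Real.cos α ≠ 1 := fun h ↦
    hα_pos.ne' ((Real.cos_eq_one_iff_of_lt_of_lt (by linarith) (by linarith)).1 h)
  have hcos : Real.cos α = Real.sin (k * π / 2) := by
    rw [← Real.sin_pi_div_two_sub]
    congr 1
    ring
  have hX' : X = (r ^ (π / θ) : ℝ) * exp (α * I) := by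
    rw [hX]; congr 3; simp only [α]; push_cast; ring
  have hY' : Y = (r ^ (π / θ) : ℝ) * exp ((π - α : ℝ) * I) := by
    rw [hY]; congr 3; simp only [α]; push_cast; ring
  rw [hX', hY', rhoH_mul_exp_mul_exp_pi_sub (Real.rpow_pos_of_pos hr _).ne', abs_of_pos hcos_pos,
    two_mul_artanh, one_add_cos_div_one_sub_cos hcos_ne_one, hcos]
  congr 5
  simp only [α]
  ring

theorem stmt7 (r k θ : ℝ) (hr : 0 < r) (hk1 : 0 < k) (hk2 : k < 1)
    (hθ1 : 0 < θ) (hθ2 : θ < 2 * Real.pi)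
    (X Y : ℂ)
    -- images of `x = r·e^{i(1-k)θ/2}` and `y = r·e^{i(1+k)θ/2}` under `z ↦ z^{π/θ}`,
    -- the conformal map of the sector `S_θ` onto the upper half-plane:
    (hX : X = (r ^ (Real.pi / θ) : ℝ) * Complex.exp (((1 - k) * Real.pi / 2) * Complex.I))
    (hY : Y = (r ^ (Real.pi / θ) : ℝ) * Complex.exp (((1 + k) * Real.pi / 2) * Complex.I)) :
    rhoH X Y = Real.log (1 + Real.sin (k * Real.pi / 2) / (Real.sin ((1 - k) * Real.pi / 4))^2) :=
  stmt7_general r k θ hr hk1 hk2 X Y hX hY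
end

section
/- For fixed u, v ∈ (0, π] with u ≤ v, the function k ↦ sin(u·k)/sin(v·k) is monotonically increasing on (0,1), and if u > v it is monotonically decreasing on (0,1). -/
/-!
The derivative of `k ↦ sin (u k) / sin (v k)` has the sign of
`W(k) = u cos (u k) sin (v k) - v sin (u k) cos (v k)`. Since `W 0 = 0` and
`W' = (v² - u²) sin (u k) sin (v k)`, which is `≥ 0` while `0 ≤ u ≤ v` and `v k ≤ π`, the quotient
increases on `(0, π / v)`. For `v < u` the quotient is the reciprocal of the increasing quotient with
`u` and `v` swapped, hence decreasing.
-/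

open Real Set

lemma hasDerivAt_sin_mul_cross (u v x : ℝ) :
    HasDerivAt (fun t => u * cos (u * t) * sin (v * t) - v * sin (u * t) * cos (v * t))
      ((v ^ 2 - u ^ 2) * (sin (u * x) * sin (v * x))) x := by
  have hu := (hasDerivAt_id' x).const_mul u
  have hv := (hasDerivAt_id' x).const_mul v
  refine (((hu.cos.const_mul u).mul hv.sin).sub ((hu.sin.const_mul v).mul hv.cos)).congr_deriv ?_
  ring

lemma sin_mul_cross_nonneg {u v k : ℝ} (hu : 0 ≤ u) (huv : u ≤ v) (hk : 0 ≤ k) (hvk : v * k ≤ π) :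
    0 ≤ u * cos (u * k) * sin (v * k) - v * sin (u * k) * cos (v * k) := by
  have hmono : MonotoneOn
      (fun t => u * cos (u * t) * sin (v * t) - v * sin (u * t) * cos (v * t)) (Icc 0 k) := by
    refine monotoneOn_of_deriv_nonneg (convex_Icc 0 k) (by fun_prop)
      (fun x _ => (hasDerivAt_sin_mul_cross u v x).differentiableAt.differentiableWithinAt) ?_
    intro x hx
    rw [interior_Icc] at hx
    have hvx : v * x ≤ π := le_trans (mul_le_mul_of_nonneg_left hx.2.le (hu.trans huv)) hvk
    have hux : u * x ≤ π := le_trans (by gcongr; exact hx.1.le) hvx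
    rw [(hasDerivAt_sin_mul_cross u v x).deriv]
    exact mul_nonneg (by nlinarith) <| mul_nonneg
      (sin_nonneg_of_nonneg_of_le_pi (by nlinarith [hx.1]) hux)
      (sin_nonneg_of_nonneg_of_le_pi (by nlinarith [hx.1]) hvx)
  simpa using hmono (left_mem_Icc.mpr hk) ⟨hk, le_rfl⟩ hk

lemma sin_mul_pos_of_mem_Ioo {w v k : ℝ} (hw : 0 < w) (hwv : w ≤ v) (hk : k ∈ Ioo 0 (π / v)) :
    0 < sin (w * k) := by
  have hvk : v * k < π := (lt_div_iff₀' (hw.trans_le hwv)).1 hk.2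
  exact sin_pos_of_pos_of_lt_pi (mul_pos hw hk.1) (by nlinarith [hk.1])

lemma monotoneOn_sin_mul_div_sin_mul {u v : ℝ} (hu : 0 ≤ u) (huv : u ≤ v) :
    MonotoneOn (fun k => sin (u * k) / sin (v * k)) (Ioo 0 (π / v)) := by
  rcases (hu.trans huv).eq_or_lt with rfl | hv
  · simp [monotoneOn_const]
  have hsin : ∀ x ∈ Ioo 0 (π / v), sin (v * x) ≠ 0 :=
    fun x hx => (sin_mul_pos_of_mem_Ioo hv le_rfl hx).ne'
  have hderiv : ∀ x ∈ Ioo 0 (π / v), HasDerivAt (fun k => sin (u * k) / sin (v * k))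
      ((cos (u * x) * u * sin (v * x) - sin (u * x) * (cos (v * x) * v)) / sin (v * x) ^ 2) x :=
    fun x hx => (((hasDerivAt_id' x).const_mul u).sin.div ((hasDerivAt_id' x).const_mul v).sin
      (hsin x hx)).congr_deriv (by ring)
  refine monotoneOn_of_deriv_nonneg (convex_Ioo 0 _)
    (fun x hx => (hderiv x hx).continuousAt.continuousWithinAt)
    (fun x hx => (hderiv x (interior_subset hx)).differentiableAt.differentiableWithinAt) ?_
  intro x hx
  rw [interior_Ioo] at hx
  rw [(hderiv x hx).deriv]
  have hcross := sin_mul_cross_nonneg hu huv hx.1.le ((lt_div_iff₀' hv).1 hx.2).le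
  exact div_nonneg (by linarith) (sq_nonneg _)

lemma antitoneOn_sin_mul_div_sin_mul {u v : ℝ} (hv : 0 < v) (hvu : v ≤ u) :
    AntitoneOn (fun k => sin (u * k) / sin (v * k)) (Ioo 0 (π / u)) := by
  intro x hx y hy hxy
  have hpos : 0 < sin (v * x) / sin (u * x) :=
    div_pos (sin_mul_pos_of_mem_Ioo hv hvu hx) (sin_mul_pos_of_mem_Ioo (hv.trans_le hvu) le_rfl hx)
  simp only [← inv_div (sin (v * _))]
  exact inv_anti₀ hpos (monotoneOn_sin_mul_div_sin_mul hv.le hvu hx hy hxy)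

theorem stmt8 (u v : ℝ) (hu : u ∈ Set.Ioc 0 Real.pi) (hv : v ∈ Set.Ioc 0 Real.pi) :
    (u ≤ v → MonotoneOn (fun k : ℝ => Real.sin (u * k) / Real.sin (v * k)) (Set.Ioo 0 1)) ∧
    (v < u → AntitoneOn (fun k : ℝ => Real.sin (u * k) / Real.sin (v * k)) (Set.Ioo 0 1)) := by
  have hIoo : ∀ {w : ℝ}, w ∈ Ioc 0 π → Ioo 0 1 ⊆ Ioo 0 (π / w) := fun hw =>
    Ioo_subset_Ioo_right ((one_le_div hw.1).2 hw.2)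
  exact ⟨fun huv => (monotoneOn_sin_mul_div_sin_mul hu.1.le huv).mono (hIoo hv),
    fun hvu => (antitoneOn_sin_mul_div_sin_mul hv.1 hvu.le).mono (hIoo hu)⟩
end

section
/- The function t ↦ t·sin(t)/sin²(t/2) is decreasing on (0, 2π). -/
open Real Set

/- Since `sin t = 2 sin (t/2) cos (t/2)`, the function is `2 t cot (t/2)`, whose derivative
`(sin t - t) / sin² (t/2)` is negative for `t > 0` because `sin t < t`. -/

lemma sin_half_pos_of_mem_Ioo {x : ℝ} (hx : x ∈ Ioo 0 (2 * π)) : 0 < sin (x / 2) :=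
  sin_pos_of_pos_of_lt_pi (by linarith [hx.1]) (by linarith [hx.2])

lemma hasDerivAt_mul_sin_div_sin_half_sq {x : ℝ} (hx : sin (x / 2) ≠ 0) :
    HasDerivAt (fun t : ℝ => t * sin t / sin (t / 2) ^ 2) ((sin x - x) / sin (x / 2) ^ 2) x := by
  have hhalf : HasDerivAt (fun t : ℝ => sin (t / 2)) (cos (x / 2) * (1 / 2)) x :=
    ((hasDerivAt_id' x).div_const 2).sin
  have hquot := ((hasDerivAt_id' x).fun_mul (hasDerivAt_sin x)).fun_div (hhalf.fun_pow 2)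
    (pow_ne_zero 2 hx)
  refine hquot.congr_deriv ?_
  have hsin : sin x = 2 * sin (x / 2) * cos (x / 2) := by rw [← sin_two_mul]; ring_nf
  have hcos : cos x = cos (x / 2) ^ 2 - sin (x / 2) ^ 2 := by rw [← cos_two_mul']; ring_nf
  field_simp
  rw [hsin, hcos]
  linear_combination (-2 * x * sin (x / 2) ^ 2) * sin_sq_add_cos_sq (x / 2)

theorem strictAntiOn_mul_sin_div_sin_half_sq :
    StrictAntiOn (fun t : ℝ => t * sin t / sin (t / 2) ^ 2) (Ioo 0 (2 * π)) := by
  have hderiv {x : ℝ} (hx : x ∈ Ioo 0 (2 * π)) :=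
    hasDerivAt_mul_sin_div_sin_half_sq (sin_half_pos_of_mem_Ioo hx).ne'
  refine strictAntiOn_of_deriv_neg (convex_Ioo 0 (2 * π))
    (fun x hx => (hderiv hx).continuousAt.continuousWithinAt) fun x hx => ?_
  rw [interior_Ioo] at hx
  rw [(hderiv hx).deriv]
  exact div_neg_of_neg_of_pos (sub_neg.2 (sin_lt hx.1)) (pow_pos (sin_half_pos_of_mem_Ioo hx) 2)

theorem stmt10 :
    AntitoneOn (fun t : ℝ => t * Real.sin t / (Real.sin (t / 2))^2)
      (Set.Ioo 0 (2 * Real.pi)) :=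
  strictAntiOn_mul_sin_div_sin_half_sq.antitoneOn
end

section
/- For a fixed μ with 0 < μ ≤ 1, the function q ↦ log(1 + μ·q)/log(1 + q) is increasing on (0, ∞); for μ > 1 it is decreasing on (0, ∞). -/
/-!
The derivative of `q ↦ log (1 + μ q) / log (1 + q)` has the sign of
`μ (1 + q) log (1 + q) - (1 + μ q) log (1 + μ q)`. Since `x log x` is convex and vanishes at `1`,
its secant slope `(1 + t) log (1 + t) / t` from `1` increases with `t`; comparing the slopes at
`t = μ q` and `t = q` gives the sign, according as `μ ≤ 1` or `μ > 1`.
-/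

open Real Set

lemma mul_mul_log_one_add_le {s t : ℝ} (hs : 0 < s) (hst : s ≤ t) :
    t * ((1 + s) * log (1 + s)) ≤ s * ((1 + t) * log (1 + t)) := by
  have ht : 0 < t := hs.trans_le hst
  have hslope := convexOn_mul_log.secant_mono (a := 1) (x := 1 + s) (y := 1 + t)
    (by norm_num) (by simp only [mem_Ici]; linarith) (by simp only [mem_Ici]; linarith)
    (by linarith) (by linarith) (by linarith)
  simp only [log_one, mul_zero, sub_zero, add_sub_cancel_left] at hslope
  rwa [div_le_div_iff₀ hs ht, mul_comm, mul_comm _ s] at hslope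

section

variable {μ q : ℝ}

lemma hasDerivAt_log_one_add_mul_div_log_one_add (hμ : 0 < μ) (hq : 0 < q) :
    HasDerivAt (fun q : ℝ => log (1 + μ * q) / log (1 + q))
      ((μ * ((1 + q) * log (1 + q)) - (1 + μ * q) * log (1 + μ * q)) /
        ((1 + μ * q) * (1 + q) * log (1 + q) ^ 2)) q := by
  have hμq : 0 < 1 + μ * q := by positivity
  have hlog : log (1 + q) ≠ 0 := (log_pos (by linarith)).ne'
  have hnum : HasDerivAt (fun q : ℝ => log (1 + μ * q)) (μ / (1 + μ * q)) q := by
    simpa using (((hasDerivAt_id' q).const_mul μ).const_add 1).log hμq.ne'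
  have hden : HasDerivAt (fun q : ℝ => log (1 + q)) (1 / (1 + q)) q := by
    simpa using ((hasDerivAt_id' q).const_add 1).log (by positivity)
  refine (hnum.div hden hlog).congr_deriv ?_
  field_simp

lemma mul_log_one_add_mul_le (hμ : 0 < μ) (hμ1 : μ ≤ 1) (hq : 0 < q) :
    (1 + μ * q) * log (1 + μ * q) ≤ μ * ((1 + q) * log (1 + q)) := by
  have h := mul_mul_log_one_add_le (mul_pos hμ hq) (mul_le_of_le_one_left hq.le hμ1)
  exact le_of_mul_le_mul_left (by linarith) hq

lemma mul_log_one_add_le_of_one_lt (hμ : 1 < μ) (hq : 0 < q) :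
    μ * ((1 + q) * log (1 + q)) ≤ (1 + μ * q) * log (1 + μ * q) := by
  have h := mul_mul_log_one_add_le hq (le_mul_of_one_le_left hq.le hμ.le)
  exact le_of_mul_le_mul_left (by linarith) hq

end

theorem stmt11 (μ : ℝ) :
    (0 < μ → μ ≤ 1 →
      MonotoneOn (fun q : ℝ => Real.log (1 + μ * q) / Real.log (1 + q)) (Set.Ioi 0)) ∧
    (1 < μ →
      AntitoneOn (fun q : ℝ => Real.log (1 + μ * q) / Real.log (1 + q)) (Set.Ioi 0)) := by
  have hcont (hμ : 0 < μ) :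
      ContinuousOn (fun q : ℝ => log (1 + μ * q) / log (1 + q)) (Ioi 0) := fun _ hq =>
    (hasDerivAt_log_one_add_mul_div_log_one_add hμ hq).continuousAt.continuousWithinAt
  refine ⟨fun hμ hμ1 => ?_, fun hμ => ?_⟩
  · refine monotoneOn_of_hasDerivWithinAt_nonneg (convex_Ioi 0) (hcont hμ)
      (fun q hq => (hasDerivAt_log_one_add_mul_div_log_one_add hμ
        (by rwa [interior_Ioi] at hq)).hasDerivWithinAt) (fun q hq => ?_)
    rw [interior_Ioi, mem_Ioi] at hq
    exact div_nonneg (sub_nonneg.2 (mul_log_one_add_mul_le hμ hμ1 hq)) (by positivity)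
  · have hμ0 : 0 < μ := one_pos.trans hμ
    refine antitoneOn_of_hasDerivWithinAt_nonpos (convex_Ioi 0) (hcont hμ0)
      (fun q hq => (hasDerivAt_log_one_add_mul_div_log_one_add hμ0
        (by rwa [interior_Ioi] at hq)).hasDerivWithinAt) (fun q hq => ?_)
    rw [interior_Ioi, mem_Ioi] at hq
    exact div_nonpos_of_nonpos_of_nonneg (sub_nonpos.2 (mul_log_one_add_le_of_one_lt hμ hq))
      (by positivity)
end
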